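/- Let A be an abelian category, let X be an acyclic ℕ-indexed chain complex in A, and let e : X → X be a chain map with e ∘ e = e. Then the chain complex whose n-th term is the kernel of e_n : X_n → X_n, with the differentials induced from those of X, is acyclic. -/

import Mathlib

open CategoryTheory CategoryTheory.Limits

noncomputable section

/-- The chain complex whose `n`-th term is the kernel of `e.f n : X n ⟶ X n` for a chain
map `e : X ⟶ X`, with differentials induced by those of `X`. -/
def kernelComplex {A : Type*} [Category A] [Abelian A] (X : ChainComplex A ℕ)
    (e : X ⟶ X) : ChainComplex A ℕ where
  X n := kernel (e.f n)
  d i j := kernel.lift (e.f j) (kernel.ι (e.f i) ≫ X.d i j)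
    (by rw [Category.assoc, ← e.comm i j, ← Category.assoc, kernel.condition, zero_comp])
  shape i j h := by
    rw [← cancel_mono (kernel.ι (e.f j))]
    simp only [kernel.lift_ι, zero_comp]
    rw [X.shape i j h, comp_zero]
  d_comp_d' i j k _ _ := by
    rw [← cancel_mono (kernel.ι (e.f k))]
    simp

namespace HomologicalComplex

lemma ExactAt.of_retract {C ι : Type*} [Category C] [HasZeroMorphisms C]
    [CategoryWithHomology C] {c : ComplexShape ι} {K L : HomologicalComplex C c}
    (h : Retract K L) {i : ι} (hL : L.ExactAt i) : K.ExactAt i := by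
  rw [exactAt_iff_isZero_homology] at hL ⊢
  let h' : Retract (K.homology i) (L.homology i) := h.map (homologyFunctor C c i)
  exact hL.of_mono h'.i

end HomologicalComplex

/-- The retraction is `1 - e`, which lands in `ker e` because `e` is idempotent. -/
def kernelComplexRetract {A : Type*} [Category A] [Abelian A] {X : ChainComplex A ℕ}
    {e : X ⟶ X} (he : e ≫ e = e) : Retract (kernelComplex X e) X where
  i :=
    { f n := kernel.ι (e.f n)
      comm' i j _ := by simp [kernelComplex] }
  r :=
    { f n := kernel.lift (e.f n) (𝟙 _ - e.f n) (by
        simp [Preadditive.sub_comp, ← HomologicalComplex.comp_f, he])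
      comm' i j _ := by
        refine (cancel_mono (kernel.ι (e.f j))).1 ?_
        simp [kernelComplex, Preadditive.comp_sub, Preadditive.sub_comp, e.comm i j] }
  retract := by
    ext n
    refine (cancel_mono (kernel.ι (e.f n))).1 ?_
    simp [kernelComplex, Preadditive.comp_sub]

/-- If `X` is an acyclic `ℕ`-indexed chain complex in an abelian
category and `e : X ⟶ X` is an idempotent chain map, then the complex of kernels of the
`e.f n`, with the induced differentials, is acyclic. -/
theorem kernelComplex_acyclic {A : Type*} [Category A] [Abelian A]
    (X : ChainComplex A ℕ) (hX : ∀ n, X.ExactAt n)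
    (e : X ⟶ X) (he : e ≫ e = e) :
    ∀ n, (kernelComplex X e).ExactAt n :=
  fun n => (hX n).of_retract (kernelComplexRetract he)

end
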